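/- Let M ≠ 0, Λ ∈ ℝ, and ℓ ≥ 2 an integer. With μ = (ℓ−1)(ℓ+2), w = (ℓ−1)ℓ(ℓ+1)(ℓ+2)/(12M), W(r) = w + 6M f(r)/(r(μr + 6M)), and Z(r) = (2MΛr³ + μr(r − 3M) − 6M²)/(r²(μr + 6M)), one has for all r > 0 with μr + 6M ≠ 0: (i) f(r)·(ℓ(ℓ+1)/r² − 6M/r³) + f(r)·W'(r) + Z(r)·W(r) = −Λℓ(ℓ+1)/6 + (ΛM + w)/r + (ℓ(ℓ+1) − 6Mw)/(2r²) − (ℓ(ℓ+1) + 3)M/r³ + 6M²/r⁴, and (ii) W(r) + Z(r) = w + (r − 3M)/r². -/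

import Mathlib

/-!
The numerator of `W + Z - w` is `6M r f(r) + 2MΛr³ + μr(r - 3M) - 6M² = (r - 3M)(μr + 6M)`,
whatever `w` is. After computing `W'` from `f' = 2M/r² - 2Λr/3`, the potential identity is a
polynomial identity once denominators are cleared; there the value `12 M w = μ(μ + 2)`, with
`ℓ(ℓ + 1) = μ + 2`, is what makes the remaining `(μr + 6M)` factors cancel.
-/

namespace ReggeWheeler

noncomputable section

def lapse (M Λ r : ℝ) : ℝ := 1 - 2 * M / r - Λ * r ^ 2 / 3

def potential (M L r : ℝ) : ℝ := L * (L + 1) / r ^ 2 - 6 * M / r ^ 3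

def evenW (M Λ μ w r : ℝ) : ℝ := w + 6 * M * lapse M Λ r / (r * (μ * r + 6 * M))

def evenZ (M Λ μ r : ℝ) : ℝ :=
  (2 * M * Λ * r ^ 3 + μ * r * (r - 3 * M) - 6 * M ^ 2) / (r ^ 2 * (μ * r + 6 * M))

end

variable {M Λ μ w r : ℝ}

theorem hasDerivAt_lapse (hr : r ≠ 0) :
    HasDerivAt (lapse M Λ) (2 * M / r ^ 2 - 2 * Λ * r / 3) r := by
  have h : HasDerivAt (lapse M Λ) (0 - (0 * r - 2 * M * 1) / r ^ 2 - Λ * (2 * r ^ 1) / 3) r :=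
    ((hasDerivAt_const r 1).sub ((hasDerivAt_const r (2 * M)).div (hasDerivAt_id r) hr)).sub
      (((hasDerivAt_pow 2 r).const_mul Λ).div_const 3)
  exact h.congr_deriv (by ring)

theorem hasDerivAt_evenW (hr : r ≠ 0) (hden : μ * r + 6 * M ≠ 0) :
    HasDerivAt (evenW M Λ μ w)
      (6 * M * ((2 * M / r ^ 2 - 2 * Λ * r / 3) * (r * (μ * r + 6 * M))
          - lapse M Λ r * (2 * μ * r + 6 * M)) / (r * (μ * r + 6 * M)) ^ 2) r := by
  have hdenom : HasDerivAt (fun x ↦ x * (μ * x + 6 * M)) (2 * μ * r + 6 * M) r :=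
    ((hasDerivAt_id r).mul (((hasDerivAt_id r).const_mul μ).add_const (6 * M))).congr_deriv
      (by simp only [id_eq]; ring)
  exact ((((hasDerivAt_lapse (M := M) (Λ := Λ) hr).const_mul (6 * M)).div hdenom
    (mul_ne_zero hr hden)).const_add w).congr_deriv (by ring)

theorem evenW_add_evenZ (hr : r ≠ 0) (hden : μ * r + 6 * M ≠ 0) :
    evenW M Λ μ w r + evenZ M Λ μ r = w + (r - 3 * M) / r ^ 2 := by
  unfold evenW evenZ lapse
  -- `field_simp` cannot see that the normalised form of `μ r + 6 M` is nonzero.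
  generalize hD : μ * r + 6 * M = D at hden ⊢
  field_simp
  subst hD
  ring

theorem lapse_mul_potential_add_evenZ_mul_evenW {L : ℝ} (hM : M ≠ 0)
    (hw : w = (L - 1) * L * (L + 1) * (L + 2) / (12 * M)) (hr : r ≠ 0)
    (hden : (L - 1) * (L + 2) * r + 6 * M ≠ 0) :
    lapse M Λ r * potential M L r + lapse M Λ r * deriv (evenW M Λ ((L - 1) * (L + 2)) w) r
        + evenZ M Λ ((L - 1) * (L + 2)) r * evenW M Λ ((L - 1) * (L + 2)) w r
      = -(Λ * L * (L + 1)) / 6 + (Λ * M + w) / r + (L * (L + 1) - 6 * M * w) / (2 * r ^ 2)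
        - (L * (L + 1) + 3) * M / r ^ 3 + 6 * M ^ 2 / r ^ 4 := by
  rw [(hasDerivAt_evenW hr hden).deriv]
  unfold potential evenW evenZ lapse
  subst hw
  generalize hD : (L - 1) * (L + 2) * r + 6 * M = D at hden ⊢
  field_simp
  subst hD
  ring

end ReggeWheeler

open ReggeWheeler in
theorem stmt_18_general (M Λ : ℝ) (hM : M ≠ 0) (ℓ : ℕ) :
    let μ : ℝ := ((ℓ : ℝ) - 1) * ((ℓ : ℝ) + 2)
    let w : ℝ := ((ℓ : ℝ) - 1) * (ℓ : ℝ) * ((ℓ : ℝ) + 1) * ((ℓ : ℝ) + 2) / (12 * M)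
    let f : ℝ → ℝ := fun r => 1 - 2 * M / r - Λ * r ^ 2 / 3
    let W : ℝ → ℝ := fun r => w + 6 * M * f r / (r * (μ * r + 6 * M))
    let Z : ℝ → ℝ := fun r =>
      (2 * M * Λ * r ^ 3 + μ * r * (r - 3 * M) - 6 * M ^ 2)
        / (r ^ 2 * (μ * r + 6 * M))
    ∀ r : ℝ, 0 < r → μ * r + 6 * M ≠ 0 →
      (f r * ((ℓ : ℝ) * ((ℓ : ℝ) + 1) / r ^ 2 - 6 * M / r ^ 3)
          + f r * deriv W r + Z r * W r
        = -(Λ * (ℓ : ℝ) * ((ℓ : ℝ) + 1)) / 6 + (Λ * M + w) / r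
          + ((ℓ : ℝ) * ((ℓ : ℝ) + 1) - 6 * M * w) / (2 * r ^ 2)
          - ((ℓ : ℝ) * ((ℓ : ℝ) + 1) + 3) * M / r ^ 3 + 6 * M ^ 2 / r ^ 4) ∧
      W r + Z r = w + (r - 3 * M) / r ^ 2 := by
  intro μ w f W Z r hr hden
  exact ⟨lapse_mul_potential_add_evenZ_mul_evenW hM rfl hr.ne' hden, evenW_add_evenZ hr.ne' hden⟩

/-- The cancellation identities (paper eq. (cancel) and following) showing that
all `(μr + 6M)` denominators cancel in `f·V^{RW} + f·W' + Z·W` and in `W + Z`,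
which allows the gauge-invariant scalar `G₊` to be written entirely in terms of
solutions of the four-dimensional Regge-Wheeler equation. -/
theorem stmt_18 (M Λ : ℝ) (hM : M ≠ 0) (ℓ : ℕ) (hℓ : 2 ≤ ℓ) :
    let μ : ℝ := ((ℓ : ℝ) - 1) * ((ℓ : ℝ) + 2)
    let w : ℝ := ((ℓ : ℝ) - 1) * (ℓ : ℝ) * ((ℓ : ℝ) + 1) * ((ℓ : ℝ) + 2) / (12 * M)
    let f : ℝ → ℝ := fun r => 1 - 2 * M / r - Λ * r ^ 2 / 3
    let W : ℝ → ℝ := fun r => w + 6 * M * f r / (r * (μ * r + 6 * M))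
    let Z : ℝ → ℝ := fun r =>
      (2 * M * Λ * r ^ 3 + μ * r * (r - 3 * M) - 6 * M ^ 2)
        / (r ^ 2 * (μ * r + 6 * M))
    ∀ r : ℝ, 0 < r → μ * r + 6 * M ≠ 0 →
      (f r * ((ℓ : ℝ) * ((ℓ : ℝ) + 1) / r ^ 2 - 6 * M / r ^ 3)
          + f r * deriv W r + Z r * W r
        = -(Λ * (ℓ : ℝ) * ((ℓ : ℝ) + 1)) / 6 + (Λ * M + w) / r
          + ((ℓ : ℝ) * ((ℓ : ℝ) + 1) - 6 * M * w) / (2 * r ^ 2)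
          - ((ℓ : ℝ) * ((ℓ : ℝ) + 1) + 3) * M / r ^ 3 + 6 * M ^ 2 / r ^ 4) ∧
      W r + Z r = w + (r - 3 * M) / r ^ 2 :=
  stmt_18_general M Λ hM ℓ
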